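/- arXiv:1605.00127 — 4 statements merged into one kernel-verified Lean document; each statement's English description precedes it below -/
import Mathlib

section
/- Let k be an integer, let T be a d×d complex matrix of charge k (i.e. Z·T = q^k·(T·Z)), and let n ≥ 1. On the (n+1)-qudit space, let CZ_{1,j} (for 2 ≤ j ≤ n+1) be the controlled-Z gate between qudits 1 and j, CZ_{1,j} e_{\vec k} = q^{k₁ k_j} e_{\vec k}, and let U = ∏_{j=2}^{n+1} CZ_{1,j}. Then U (T ⊗ 1^{⊗n}) U⁻¹ = T ⊗ Z^k ⊗ ⋯ ⊗ Z^k (with n factors of Z^k). -/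
/-- The qudit Pauli matrix `Z`, with `Z e_k = q^k e_k`. -/
noncomputable def Zmat (d : ℕ) (q : ℂ) : Matrix (ZMod d) (ZMod d) ℂ :=
  Matrix.of fun j k => if j = k then q ^ k.val else 0

/-- The controlled-Z gate between qudit 1 and qudit `i.succ + 1` on `(n+1)`-qudits:
`CZ_{1,j} e_{\vec k} = q^{k₁ k_j} e_{\vec k}` (0-based: wires `0` and `i.succ`). -/
noncomputable def CZ1 (d : ℕ) (n : ℕ) (q : ℂ) (i : Fin n) :
    Matrix (Fin (n + 1) → ZMod d) (Fin (n + 1) → ZMod d) ℂ :=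
  Matrix.of fun v w => if v = w then q ^ ((w 0).val * (w i.succ).val) else 0

lemma Zmat_eq_diagonal (d : ℕ) (q : ℂ) :
    Zmat d q = Matrix.diagonal (fun j : ZMod d => q ^ j.val) := by
  ext j k
  simp only [Zmat, Matrix.of_apply, Matrix.diagonal_apply]
  split
  · subst ‹j = k›; rfl
  · rfl

lemma CZ1_eq_diagonal (d n : ℕ) (q : ℂ) (i : Fin n) :
    CZ1 d n q i =
      Matrix.diagonal (fun v : Fin (n + 1) → ZMod d =>
        q ^ ((v 0).val * (v i.succ).val)) := by
  ext v w
  simp only [CZ1, Matrix.of_apply, Matrix.diagonal_apply]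
  split
  · subst ‹v = w›; rfl
  · rfl

lemma prod_CZ1 (d n : ℕ) [NeZero d] (q : ℂ) :
    (List.ofFn fun i : Fin n => CZ1 d n q i).prod =
      Matrix.diagonal (fun v : Fin (n + 1) → ZMod d =>
        ∏ i : Fin n, q ^ ((v 0).val * (v i.succ).val)) := by
  have h1 : (List.ofFn fun i : Fin n => CZ1 d n q i)
      = (List.ofFn fun i : Fin n =>
          (fun v : Fin (n + 1) → ZMod d => q ^ ((v 0).val * (v i.succ).val))).map
        (Matrix.diagonalRingHom (Fin (n + 1) → ZMod d) ℂ) := by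
    rw [List.map_ofFn]
    congr 1
    funext i
    exact CZ1_eq_diagonal d n q i
  rw [h1, ← map_list_prod]
  have h2 : (List.ofFn fun i : Fin n =>
      (fun v : Fin (n + 1) → ZMod d => q ^ ((v 0).val * (v i.succ).val))).prod
      = fun v : Fin (n + 1) → ZMod d => ∏ i : Fin n, q ^ ((v 0).val * (v i.succ).val) := by
    rw [List.prod_ofFn]
    funext v
    simp
  rw [h2]
  rfl

lemma Zmat_zpow (d : ℕ) [NeZero d] (q : ℂ) (hq0 : q ≠ 0) (k : ℤ) :
    Zmat d q ^ k = Matrix.diagonal (fun j : ZMod d => (q ^ j.val) ^ k) := by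
  have hne : ∀ j : ZMod d, (q : ℂ) ^ j.val ≠ 0 := fun j => pow_ne_zero _ hq0
  have hdiag : ∀ m : ℕ, Zmat d q ^ m = Matrix.diagonal (fun j : ZMod d => (q ^ j.val) ^ m) := by
    intro m
    rw [Zmat_eq_diagonal, Matrix.diagonal_pow]
    rfl
  have hinv : ∀ m : ℕ,
      (Matrix.diagonal (fun j : ZMod d => (q ^ j.val) ^ m))⁻¹ =
        Matrix.diagonal (fun j : ZMod d => ((q ^ j.val) ^ m)⁻¹) := by
    intro m
    apply Matrix.inv_eq_right_inv
    rw [Matrix.diagonal_mul_diagonal]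
    have : (fun j : ZMod d => (q ^ j.val) ^ m * ((q ^ j.val) ^ m)⁻¹) = fun _ => (1 : ℂ) :=
      funext fun j => mul_inv_cancel₀ (pow_ne_zero _ (hne j))
    rw [this, Matrix.diagonal_one]
  cases k with
  | ofNat m =>
    have : (fun j : ZMod d => (q ^ j.val) ^ (Int.ofNat m)) =
        fun j : ZMod d => (q ^ j.val) ^ m := funext fun j => zpow_natCast _ m
    rw [this]
    rw [show ((Int.ofNat m : ℤ)) = (m : ℤ) from rfl, zpow_natCast, hdiag]
  | negSucc m =>
    have : (fun j : ZMod d => (q ^ j.val) ^ (Int.negSucc m)) =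
        fun j : ZMod d => ((q ^ j.val) ^ (m + 1))⁻¹ := funext fun j => zpow_negSucc _ m
    rw [this, zpow_negSucc, hdiag, hinv]

/-- If `q^a * c = (q^k * q^b) * c`, then `c * x^S = c * y^S` for all `S`. -/
lemma mul_pow_of_mul_eq {x y c : ℂ} (h : x * c = y * c) (S : ℕ) :
    c * x ^ S = c * y ^ S := by
  induction S with
  | zero => simp
  | succ m ih =>
    rw [pow_succ, pow_succ]
    linear_combination x * ih + y ^ m * h

/-- if `T` has charge `k` (`Z·T = q^k·(T·Z)`), `n ≥ 1`, and
`U = ∏_{j=2}^{n+1} CZ_{1,j}`, then `U (T ⊗ 1^{⊗n}) U⁻¹ = T ⊗ Z^k ⊗ ⋯ ⊗ Z^k`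
(with `n` factors of `Z^k`), where tensor products of matrices act under the canonical
identification of the `(n+1)`-qudit space with the tensor product of 1-qudit spaces. -/
theorem stmt_6 (d : ℕ) [NeZero d] (n : ℕ) (hn : 1 ≤ n) (q : ℂ)
    (hq : q = Complex.exp (2 * Real.pi * Complex.I / d)) (k : ℤ)
    (T : Matrix (ZMod d) (ZMod d) ℂ)
    (hT : Zmat d q * T = q ^ k • (T * Zmat d q)) :
    (List.ofFn fun i : Fin n => CZ1 d n q i).prod *
        (Matrix.of fun v w : Fin (n + 1) → ZMod d =>
          T (v 0) (w 0) *
            ∏ i : Fin n, (1 : Matrix (ZMod d) (ZMod d) ℂ) (v i.succ) (w i.succ)) *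
        ((List.ofFn fun i : Fin n => CZ1 d n q i).prod)⁻¹
      = Matrix.of fun v w : Fin (n + 1) → ZMod d =>
          T (v 0) (w 0) * ∏ i : Fin n, (Zmat d q ^ k) (v i.succ) (w i.succ) := by
  have hq0 : q ≠ 0 := by rw [hq]; exact Complex.exp_ne_zero _
  set f : (Fin (n + 1) → ZMod d) → ℂ :=
    fun v => ∏ i : Fin n, q ^ ((v 0).val * (v i.succ).val) with hf
  have hfne : ∀ v, f v ≠ 0 := by
    intro v
    exact Finset.prod_ne_zero_iff.mpr fun i _ => pow_ne_zero _ hq0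
  have hU : (List.ofFn fun i : Fin n => CZ1 d n q i).prod = Matrix.diagonal f :=
    prod_CZ1 d n q
  have hUinv : (Matrix.diagonal f)⁻¹ = Matrix.diagonal (fun v => (f v)⁻¹) := by
    apply Matrix.inv_eq_right_inv
    rw [Matrix.diagonal_mul_diagonal]
    have : (fun v => f v * (f v)⁻¹) = fun _ => (1 : ℂ) :=
      funext fun v => mul_inv_cancel₀ (hfne v)
    rw [this, Matrix.diagonal_one]
  rw [hU, hUinv, Zmat_zpow d q hq0]
  ext v w
  simp only [Matrix.mul_diagonal, Matrix.diagonal_mul, Matrix.of_apply,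
    Matrix.diagonal_apply]
  by_cases hvw : ∀ i : Fin n, v i.succ = w i.succ
  · -- diagonal case
    have hones : ∀ i : Fin n,
        (1 : Matrix (ZMod d) (ZMod d) ℂ) (v i.succ) (w i.succ) = 1 := by
      intro i; rw [hvw i]; exact Matrix.one_apply_eq _
    have hifs : ∀ i : Fin n,
        (if v i.succ = w i.succ then ((q ^ (v i.succ).val) ^ k : ℂ) else 0)
          = (q ^ k) ^ (v i.succ).val := by
      intro i
      rw [if_pos (hvw i), ← zpow_natCast q (v i.succ).val, ← zpow_mul, mul_comm,
        zpow_mul, zpow_natCast]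
    set a := v 0
    set b := w 0
    set c := T a b
    set S : ℕ := ∑ i : Fin n, (v i.succ).val with hS
    have hfv : f v = (q ^ a.val) ^ S := by
      simp only [hf, hS]
      rw [← Finset.prod_pow_eq_pow_sum]
      exact Finset.prod_congr rfl fun i _ => pow_mul q _ _
    have hfw : f w = (q ^ b.val) ^ S := by
      rw [hf]
      have hwv : ∀ i : Fin n, (w i.succ).val = (v i.succ).val := fun i => by rw [hvw i]
      simp only [hf, hS, hwv]
      rw [← Finset.prod_pow_eq_pow_sum]
      exact Finset.prod_congr rfl fun i _ => pow_mul q _ _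
    have h' : (Zmat d q * T) a b = (q ^ k • (T * Zmat d q)) a b := by rw [hT]
    rw [Zmat_eq_diagonal, Matrix.smul_apply, Matrix.diagonal_mul, Matrix.mul_diagonal,
      smul_eq_mul] at h'
    have hrel : q ^ a.val * c = (q ^ k * q ^ b.val) * c := by
      rw [h']; ring
    have key := mul_pow_of_mul_eq hrel S
    rw [mul_pow] at key
    have hbS : ((q ^ b.val : ℂ) ^ S) ≠ 0 := pow_ne_zero _ (pow_ne_zero _ hq0)
    calc f v * (c * ∏ i : Fin n,
            (1 : Matrix (ZMod d) (ZMod d) ℂ) (v i.succ) (w i.succ)) * (f w)⁻¹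
        = (q ^ a.val) ^ S * c * ((q ^ b.val) ^ S)⁻¹ := by
          rw [hfv, hfw, Finset.prod_congr rfl (fun i _ => hones i)]
          simp
      _ = c * ((q ^ a.val) ^ S) * ((q ^ b.val) ^ S)⁻¹ := by ring
      _ = c * ((q ^ k) ^ S * (q ^ b.val) ^ S) * ((q ^ b.val) ^ S)⁻¹ := by rw [key]
      _ = c * (q ^ k) ^ S := by
          field_simp
      _ = c * ∏ i : Fin n, (q ^ k) ^ (v i.succ).val := by
          rw [Finset.prod_pow_eq_pow_sum]
      _ = c * ∏ i : Fin n,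
            (if v i.succ = w i.succ then ((q ^ (v i.succ).val) ^ k : ℂ) else 0) := by
          rw [Finset.prod_congr rfl (fun i _ => (hifs i).symm)]
  · -- off-diagonal case: both sides vanish
    push_neg at hvw
    obtain ⟨i, hi⟩ := hvw
    have h1 : (∏ i : Fin n,
        (1 : Matrix (ZMod d) (ZMod d) ℂ) (v i.succ) (w i.succ)) = 0 :=
      Finset.prod_eq_zero (Finset.mem_univ i) (Matrix.one_apply_ne hi)
    have h2 : (∏ x : Fin n,
        (if v x.succ = w x.succ then ((q ^ (v x.succ).val) ^ k : ℂ) else 0)) = 0 :=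
      Finset.prod_eq_zero (Finset.mem_univ i) (if_neg hi)
    rw [h1, h2]
    ring
end

section
/- The string Fourier transform satisfies F_s^{2n} e_{\vec k} = q^{|\vec k|²} e_{\vec k} for every basis vector e_{\vec k}; that is, the 2n-th power of F_s (a '2π rotation') acts on each product basis state as multiplication by the phase q^{|\vec k|²}. -/
/-- The string Fourier transform `F_s` on `n`-qudits: its `(ℓ, k)` entry equals
`d^{(1-n)/2} · ζ^{|ℓ|²} · ∏_{j₁ < j₂} q^{-ℓ_{j₁} k_{j₂}}` if `|ℓ| = |k|`, and `0` otherwise. -/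
noncomputable def SFT (d n : ℕ) (q ζ : ℂ) :
    Matrix (Fin n → ZMod d) (Fin n → ZMod d) ℂ :=
  Matrix.of fun l k =>
    if (∑ j, l j) = (∑ j, k j) then
      (Real.sqrt d : ℂ) ^ (1 - (n : ℤ)) * ζ ^ (∑ j, l j).val ^ 2 *
        ∏ p ∈ Finset.univ.filter (fun p : Fin n × Fin n => p.1 < p.2),
          q ^ (-(((l p.1).val * (k p.2).val : ℕ) : ℤ))
    else 0

/-
Write `q ^ j = ψ j` with `ψ` the standard additive character `j ↦ exp (2πi j / d)` of `ZMod d`.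
The `(m, k)` entry of `F_s²` vanishes unless `|m| = |k| = c`, and is then `d^{1-n} ψ(c²)` times the
sum of `ψ(-w · ℓ)` over the hyperplane `|ℓ| = c`, where `w_j = ∑_{i<j} m_i + ∑_{i>j} k_i` collects
the two triangular phases. By orthogonality of characters this sum vanishes unless `w` is constant,
and `w` is constant exactly when `m` is the cyclic shift `j ↦ k_{j+1}` of `k`. Hence `F_s²` is a
monomial matrix, `F_s² e_k = ψ(c k₀) e_{shift k}`, and its `n`-th power returns every `e_k` to
itself with the accumulated phase `ψ(c ∑_i k_i) = q^{c²}`.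
-/

open Finset

namespace AddChar

theorem map_sum_eq_prod {A M ι : Type*} [AddCommMonoid A] [CommMonoid M] (ψ : AddChar A M)
    (s : Finset ι) (f : ι → A) : ψ (∑ i ∈ s, f i) = ∏ i ∈ s, ψ (f i) := by
  induction s using Finset.cons_induction with
  | empty => simp
  | cons i s _ ih => rw [sum_cons, map_add_eq_mul, ih, prod_cons]

variable {R R' ι : Type*} [CommRing R] [Fintype R] [DecidableEq R] [CommRing R'] [IsDomain R']
  [Fintype ι] [DecidableEq ι]

theorem card_mul_sum_hyperplane_apply_dotProduct {ψ : AddChar R R'} (hψ : ψ.IsPrimitive)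
    (g : ι → R) (c : R) (i₀ : ι) :
    Fintype.card R * ∑ l : ι → R with ∑ i, l i = c, ψ (g ⬝ᵥ l) =
      if ∀ i, g i = g i₀ then Fintype.card R ^ Fintype.card ι * ψ (g i₀ * c) else 0 := by
  -- Detect the constraint with `ψ`; the sum over `l` then factors over the coordinates.
  have indicator (l : ι → R) : (if ∑ i, l i = c then (Fintype.card R : R') else 0) =
      ∑ t, ψ (t * (∑ i, l i - c)) := by
    simp [sum_mulShift _ hψ, sub_eq_zero]
  have factor (t : R) : ∑ l : ι → R, ψ (t * (∑ i, l i - c)) * ψ (g ⬝ᵥ l) =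
      ψ (-(t * c)) * ∏ i, ∑ x, ψ (x * (t + g i)) := by
    simp_rw [Fintype.prod_sum, mul_sum, ← map_add_eq_mul, ← map_sum_eq_prod, ← map_add_eq_mul]
    refine sum_congr rfl fun l _ => congrArg ψ ?_
    simp only [dotProduct, mul_sum, mul_sub, mul_comm (l _), add_mul, sum_add_distrib]
    ring
  have orthogonality (t : R) (i : ι) :
      ∑ x, ψ (x * (t + g i)) = if t = -g i then (Fintype.card R : R') else 0 := by
    simp [sum_mulShift _ hψ, add_eq_zero_iff_eq_neg]
  calc Fintype.card R * ∑ l : ι → R with ∑ i, l i = c, ψ (g ⬝ᵥ l)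
      = ∑ t, ∑ l : ι → R, ψ (t * (∑ i, l i - c)) * ψ (g ⬝ᵥ l) := by
        rw [sum_filter, mul_sum, sum_comm]
        refine sum_congr rfl fun l _ => ?_
        rw [← sum_mul, ← indicator]
        split_ifs <;> simp
    _ = ∑ t, if ∀ i, t = -g i then Fintype.card R ^ Fintype.card ι * ψ (-(t * c)) else 0 := by
        simp_rw [factor, orthogonality, Fintype.prod_ite_zero, prod_const, card_univ, mul_ite,
          mul_zero, mul_comm]
    _ = _ := by
      split_ifs with hg
      · rw [sum_eq_single (-g i₀) (fun t _ ht => if_neg fun h => ht (h i₀)) (by simp)]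
        simp [hg, mul_comm]
      · refine sum_eq_zero fun t _ => if_neg fun h => hg fun i => ?_
        rw [← neg_neg (g i), ← h i, h i₀, neg_neg]

end AddChar

namespace Matrix

theorem pow_mulVec_single_one_of_forall {α R : Type*} [Fintype α] [DecidableEq α] [CommSemiring R]
    {M : Matrix α α R} {σ : α → α} {φ : α → R}
    (hM : ∀ a, M *ᵥ Pi.single a 1 = φ a • Pi.single (σ a) 1) (t : ℕ) (a : α) :
    M ^ t *ᵥ Pi.single a 1 = (∏ i ∈ range t, φ (σ^[i] a)) • Pi.single (σ^[t] a) 1 := by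
  induction t generalizing a with
  | zero => rw [pow_zero, one_mulVec]; simp
  | succ t ih =>
    rw [pow_succ, ← mulVec_mulVec, hM, mulVec_smul, ih, smul_smul]
    simp only [prod_range_succ', Function.iterate_succ_apply, Function.iterate_zero_apply,
      mul_comm]

end Matrix

section Rotation

open Fin.NatCast

variable {M : Type*} {n : ℕ}

theorem finRotate_castSucc (i : Fin n) : finRotate (n + 1) i.castSucc = i.succ := by
  simp [finRotate_apply, Fin.coeSucc_eq_succ]

theorem iterate_comp_finRotate_apply (v : Fin (n + 1) → M) (t : ℕ) (j : Fin (n + 1)) :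
    ((· ∘ finRotate (n + 1))^[t] v) j = v (j + t) := by
  induction t generalizing v with
  | zero => simp
  | succ t ih => simp [ih, finRotate_apply, add_assoc]

theorem iterate_comp_finRotate_self (v : Fin (n + 1) → M) :
    (· ∘ finRotate (n + 1))^[n + 1] v = v := by
  ext j
  simp [iterate_comp_finRotate_apply]

variable [AddCommMonoid M]

theorem sum_iterate_comp_finRotate (v : Fin (n + 1) → M) (t : ℕ) :
    ∑ j, ((· ∘ finRotate (n + 1))^[t] v) j = ∑ j, v j := by
  simp_rw [iterate_comp_finRotate_apply]
  exact Equiv.sum_comp (Equiv.addRight (t : Fin (n + 1))) v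

theorem sum_range_iterate_comp_finRotate_apply_zero (v : Fin (n + 1) → M) :
    ∑ i ∈ range (n + 1), ((· ∘ finRotate (n + 1))^[i] v) 0 = ∑ j, v j := by
  simp_rw [iterate_comp_finRotate_apply, zero_add]
  rw [← Fin.sum_univ_eq_sum_range (fun i => v i)]
  simp

end Rotation

section CrossWeight

variable {R : Type*} {n : ℕ}

def crossWeight [AddCommMonoid R] (m k : Fin n → R) (j : Fin n) : R :=
  ∑ i ∈ Iio j, m i + ∑ i ∈ Ioi j, k i

theorem sum_lt_mul_add_sum_lt_mul [CommSemiring R] (m l k : Fin n → R) :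
    ∑ p : Fin n × Fin n with p.1 < p.2, m p.1 * l p.2 +
      ∑ p : Fin n × Fin n with p.1 < p.2, l p.1 * k p.2 = crossWeight m k ⬝ᵥ l := by
  simp only [dotProduct, crossWeight, add_mul, sum_add_distrib, sum_mul, ← filter_gt_eq_Iio,
    ← filter_lt_eq_Ioi, sum_filter, Fintype.sum_prod_type, ite_mul, zero_mul]
  rw [sum_comm (f := fun i j => if i < j then m i * l j else 0)]
  simp_rw [mul_comm (l _)]

variable [AddCommGroup R]

theorem crossWeight_zero (m k : Fin (n + 1) → R) : crossWeight m k 0 = ∑ i, k i - k 0 := by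
  rw [crossWeight, Fin.sum_Ioi_zero, Fin.sum_univ_succ, show Iio (0 : Fin (n + 1)) = ∅ from Iio_bot]
  simp

theorem crossWeight_succ_add (m k : Fin (n + 1) → R) (j : Fin n) :
    crossWeight m k j.succ + k j.succ = crossWeight m k j.castSucc + m j.castSucc := by
  have hIio : Iio j.succ = insert j.castSucc (Iio j.castSucc) := by
    ext i; simp [Iio_insert, ← Fin.le_castSucc_iff]
  have hIoi : Ioi j.castSucc = insert j.succ (Ioi j.succ) := by
    ext i; simp [Ioi_insert, Fin.castSucc_lt_iff_succ_le]
  simp only [crossWeight, hIio, hIoi, sum_insert, mem_Iio, mem_Ioi, lt_irrefl, not_false_eq_true]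
  abel

theorem crossWeight_eq_crossWeight_zero_iff {m k : Fin (n + 1) → R} (hc : ∑ i, m i = ∑ i, k i) :
    (∀ j, crossWeight m k j = crossWeight m k 0) ↔ m = k ∘ finRotate (n + 1) := by
  constructor
  · intro hconst
    have hcastSucc (i : Fin n) : m i.castSucc = k i.succ := by
      have h := crossWeight_succ_add m k i
      rw [hconst, hconst i.castSucc] at h
      exact (add_left_cancel h).symm
    have hlast : m (Fin.last n) = k 0 := by
      rw [Fin.sum_univ_castSucc, Fin.sum_univ_succ, sum_congr rfl fun i _ => hcastSucc i] at hc
      rw [add_comm] at hc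
      exact add_right_cancel hc
    ext j
    induction j using Fin.lastCases with
    | last => simp [hlast]
    | cast i => simp [hcastSucc]
  · rintro rfl j
    induction j using Fin.induction with
    | zero => rfl
    | succ i ih =>
      have h := crossWeight_succ_add (k ∘ finRotate (n + 1)) k i
      rw [Function.comp_apply, finRotate_castSucc, add_left_inj] at h
      rw [h, ← ih]

end CrossWeight

section StringFourierTransform

open ZMod Complex

variable {d : ℕ} [NeZero d] {q : ℂ}

theorem zpow_eq_stdAddChar (hq : q = exp (2 * Real.pi * I / d)) (j : ℤ) :
    q ^ j = stdAddChar (j : ZMod d) := by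
  rw [stdAddChar_coe, hq, ← exp_int_mul]
  ring_nf

theorem pow_eq_stdAddChar (hq : q = exp (2 * Real.pi * I / d)) (j : ℕ) :
    q ^ j = stdAddChar (j : ZMod d) := by
  simpa using zpow_eq_stdAddChar hq j

theorem SFT_apply {n : ℕ} (hq : q = exp (2 * Real.pi * I / d)) (ζ : ℂ) (l k : Fin n → ZMod d) :
    SFT d n q ζ l k = if ∑ j, l j = ∑ j, k j then
      (Real.sqrt d : ℂ) ^ (1 - (n : ℤ)) * ζ ^ (∑ j, l j).val ^ 2 *
        stdAddChar (-∑ p : Fin n × Fin n with p.1 < p.2, l p.1 * k p.2)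
      else 0 := by
  have hfactor (a b : ZMod d) : q ^ (-((a.val * b.val : ℕ) : ℤ)) = stdAddChar (-(a * b)) := by
    rw [zpow_eq_stdAddChar hq]
    push_cast
    simp
  simp only [SFT, Matrix.of_apply, hfactor, ← AddChar.map_sum_eq_prod, sum_neg_distrib]

theorem sqrt_zpow_one_sub_sq_mul_pow (n : ℕ) :
    ((Real.sqrt d : ℂ) ^ (1 - ((n + 1 : ℕ) : ℤ))) ^ 2 * (d : ℂ) ^ n = 1 := by
  have hsq : (Real.sqrt d : ℂ) ^ 2 = d := by
    rw [← ofReal_pow, Real.sq_sqrt (Nat.cast_nonneg d), ofReal_natCast]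
  rw [show 1 - ((n + 1 : ℕ) : ℤ) = -n by push_cast; ring, ← zpow_natCast (_ ^ _) 2, ← zpow_mul,
    mul_comm (-(n : ℤ)), zpow_mul, zpow_natCast, hsq, zpow_neg, zpow_natCast]
  exact inv_mul_cancel₀ (pow_ne_zero _ (Nat.cast_ne_zero.2 (NeZero.ne d)))

theorem sum_stdAddChar_neg_crossWeight_dotProduct {n : ℕ} {m k : Fin (n + 1) → ZMod d}
    (hc : ∑ i, m i = ∑ i, k i) :
    ∑ l : Fin (n + 1) → ZMod d with ∑ i, l i = ∑ i, k i, stdAddChar ((-crossWeight m k) ⬝ᵥ l) =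
      if m = k ∘ finRotate (n + 1) then
        d ^ n * stdAddChar (-(∑ i, k i - k 0) * ∑ i, k i)
      else 0 := by
  have hsum := AddChar.card_mul_sum_hyperplane_apply_dotProduct (isPrimitive_stdAddChar d)
    (-crossWeight m k) (∑ i, k i) 0
  simp only [ZMod.card, Fintype.card_fin, Pi.neg_apply, neg_inj] at hsum
  simp only [crossWeight_eq_crossWeight_zero_iff hc] at hsum
  rw [crossWeight_zero] at hsum
  refine mul_left_cancel₀ (Nat.cast_ne_zero.2 (NeZero.ne d)) (hsum.trans ?_)
  split_ifs <;> ring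

theorem SFT_mul_SFT_apply {n : ℕ} (hq : q = exp (2 * Real.pi * I / d)) {ζ : ℂ} (hζ : ζ ^ 2 = q)
    (m k : Fin (n + 1) → ZMod d) :
    (SFT d (n + 1) q ζ * SFT d (n + 1) q ζ) m k =
      if m = k ∘ finRotate (n + 1) then stdAddChar ((∑ i, k i) * k 0) else 0 := by
  set c := ∑ i, k i
  set s : ℂ := (Real.sqrt d : ℂ) ^ (1 - ((n + 1 : ℕ) : ℤ))
  rw [Matrix.mul_apply]
  simp only [SFT_apply hq]
  by_cases hc : ∑ i, m i = c
  · have hphase : ζ ^ c.val ^ 2 * ζ ^ c.val ^ 2 = stdAddChar (c * c) := by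
      rw [← pow_add, ← two_mul, pow_mul, hζ, pow_eq_stdAddChar hq]
      simp [sq]
    calc _ = ∑ l : Fin (n + 1) → ZMod d, s ^ 2 * stdAddChar (c * c) *
          if ∑ i, l i = c then stdAddChar ((-crossWeight m k) ⬝ᵥ l) else 0 := by
          refine sum_congr rfl fun l _ => ?_
          by_cases hl : ∑ i, l i = c
          · rw [if_pos (hc.trans hl.symm), if_pos hl, if_pos hl, hc, hl, neg_dotProduct,
              ← sum_lt_mul_add_sum_lt_mul, ← hphase, neg_add, AddChar.map_add_eq_mul]
            ring
          · rw [if_neg (fun h => hl (h.symm.trans hc)), if_neg hl, if_neg hl]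
            simp
      _ = _ := by
        rw [← mul_sum, ← sum_filter, sum_stdAddChar_neg_crossWeight_dotProduct hc]
        split_ifs
        · rw [mul_mul_mul_comm, mul_comm (stdAddChar _), ← mul_assoc,
            sqrt_zpow_one_sub_sq_mul_pow, one_mul, ← AddChar.map_add_eq_mul]
          congr 1
          ring
        · rw [mul_zero]
  · rw [if_neg fun hrot => hc (by rw [hrot]; exact Equiv.sum_comp (finRotate (n + 1)) k)]
    refine sum_eq_zero fun l _ => ?_
    by_cases hl : ∑ i, l i = c
    · rw [if_neg fun h => hc (h.trans hl), zero_mul]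
    · rw [if_neg hl, mul_zero]

open Matrix in
theorem SFT_sq_mulVec_single {n : ℕ} (hq : q = exp (2 * Real.pi * I / d)) {ζ : ℂ}
    (hζ : ζ ^ 2 = q) (k : Fin (n + 1) → ZMod d) :
    SFT d (n + 1) q ζ ^ 2 *ᵥ Pi.single k 1 =
      stdAddChar ((∑ i, k i) * k 0) • Pi.single (k ∘ finRotate (n + 1)) 1 := by
  ext m
  simp [sq, SFT_mul_SFT_apply hq hζ, Pi.single_apply]

end StringFourierTransform

theorem stmt_8_general (d n : ℕ) [NeZero d] (hn : 1 ≤ n) (q ζ : ℂ)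
    (hq : q = Complex.exp (2 * Real.pi * Complex.I / d))
    (hζ2 : ζ ^ 2 = q) (k : Fin n → ZMod d) :
    (SFT d n q ζ ^ (2 * n)).mulVec (fun m => if m = k then 1 else 0)
      = q ^ (∑ j, k j).val ^ 2 •
          (fun m : Fin n → ZMod d => if m = k then (1 : ℂ) else 0) := by
  obtain ⟨n, rfl⟩ : ∃ n', n = n' + 1 := ⟨n - 1, by omega⟩
  have hbasis : (fun m => if m = k then (1 : ℂ) else 0) = Pi.single k 1 := by
    ext m
    simp [Pi.single_apply]
  rw [hbasis, pow_mul, Matrix.pow_mulVec_single_one_of_forall (SFT_sq_mulVec_single hq hζ2),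
    iterate_comp_finRotate_self]
  congr 1
  simp_rw [sum_iterate_comp_finRotate, ← AddChar.map_sum_eq_prod, ← mul_sum,
    sum_range_iterate_comp_finRotate_apply_zero, pow_eq_stdAddChar hq]
  simp [sq]

/-- `F_s^{2n} e_{\vec k} = q^{|\vec k|²} e_{\vec k}` for every product basis
vector `e_{\vec k}`: the `2n`-th power of `F_s` (a "2π rotation") acts on each product basis
state as multiplication by the phase `q^{|\vec k|²}`. -/
theorem stmt_8 (d n : ℕ) [NeZero d] (hn : 1 ≤ n) (q ζ : ℂ)
    (hq : q = Complex.exp (2 * Real.pi * Complex.I / d))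
    (hζ2 : ζ ^ 2 = q) (hζd : ζ ^ d ^ 2 = 1) (k : Fin n → ZMod d) :
    (SFT d n q ζ ^ (2 * n)).mulVec (fun m => if m = k then 1 else 0)
      = q ^ (∑ j, k j).val ^ 2 •
          (fun m : Fin n → ZMod d => if m = k then (1 : ℂ) else 0) :=
  stmt_8_general d n hn q ζ hq hζ2 k
end

section
/- For every \vec k : Fin n → ZMod d, the GHZ-type resource state obtained by inverse Fourier transforming |Max_{\vec k}⟩ = F_s e_{\vec k} is |GHZ_{\vec k}⟩ = (F ⊗ ⋯ ⊗ F)⁻¹ F_s e_{\vec k} = ζ^{-|\vec k|²} · d^{-1/2} · ∑_{s ∈ ZMod d} q^{-s|\vec k|} e_{(k₁+s,\, k₁+k₂+s,\, …,\, |\vec k|+s)}. -/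
/-!
`F ⊗ ⋯ ⊗ F` is invertible, with inverse the same tensor power taken at `q⁻¹`
(orthogonality of the characters `s ↦ q^{s t}` of `ZMod d`), so it suffices to show
`(F ⊗ ⋯ ⊗ F) |GHZ_k⟩ = F_s e_k` entrywise. In the entry `ℓ` of the left side the sum over `s` is
a character sum that vanishes unless `|ℓ| = |k|`, leaving the phase `q^{∑_j (k₁ + ⋯ + k_j) ℓ_j}`.
Together with the phase `∏_{j₁ < j₂} q^{ℓ_{j₁} k_{j₂}}` of `F_s` this gives `q^{|k| |ℓ|} = ζ^{2 |k|²}`,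
which is exactly the discrepancy between the powers of `ζ` on the two sides.
-/

/-- The 1-qudit Fourier matrix `F`, with `F e_k = d^{-1/2} ∑_ℓ q^{kℓ} e_ℓ`. -/
noncomputable def Fmat (d : ℕ) (q : ℂ) : Matrix (ZMod d) (ZMod d) ℂ :=
  Matrix.of fun l k => (Real.sqrt d : ℂ)⁻¹ * q ^ (k.val * l.val)

/-- The `n`-fold tensor (Kronecker) power `F ⊗ ⋯ ⊗ F` acting on the `n`-qudit space. -/
noncomputable def tensF (d n : ℕ) (q : ℂ) :
    Matrix (Fin n → ZMod d) (Fin n → ZMod d) ℂ :=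
  Matrix.of fun l k => ∏ j, Fmat d q (l j) (k j)

/-- The product basis vector `e_{\vec k}` of the `n`-qudit space. -/
noncomputable def ket (d n : ℕ) (k : Fin n → ZMod d) : (Fin n → ZMod d) → ℂ :=
  fun m => if m = k then 1 else 0

open Finset Matrix

theorem AddChar.map_sum_eq_prod_s13 {ι A M : Type*} [AddCommMonoid A] [CommMonoid M] (ψ : AddChar A M)
    (s : Finset ι) (f : ι → A) : ψ (∑ i ∈ s, f i) = ∏ i ∈ s, ψ (f i) := by
  induction s using Finset.cons_induction with
  | empty => simp
  | cons a s ha ih => rw [sum_cons, prod_cons, ψ.map_add_eq_mul, ih]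

theorem sum_Iic_mul_add_sum_lt_mul {ι R : Type*} [Fintype ι] [LinearOrder ι]
    [LocallyFiniteOrderBot ι] [CommSemiring R] (k l : ι → R) :
    ∑ j, (∑ i ∈ Iic j, k i) * l j + ∑ p ∈ univ.filter (fun p : ι × ι => p.1 < p.2), l p.1 * k p.2
      = (∑ i, k i) * ∑ j, l j := by
  have hlt : ∑ p ∈ univ.filter (fun p : ι × ι => p.1 < p.2), l p.1 * k p.2
      = ∑ j, ∑ i ∈ univ.filter (fun i => ¬ i ≤ j), k i * l j := by
    simp only [sum_filter, Fintype.sum_prod_type, not_le, mul_comm]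
  rw [hlt, sum_mul_sum, sum_comm, ← sum_add_distrib]
  refine sum_congr rfl fun j _ => ?_
  rw [sum_mul, ← filter_ge_eq_Iic, sum_filter_add_sum_filter_not]

def tensorPower {ι R : Type*} [CommMonoid R] (A : Matrix ι ι R) (κ : Type*) [Fintype κ] :
    Matrix (κ → ι) (κ → ι) R :=
  of fun l m => ∏ j, A (l j) (m j)

theorem tensorPower_mul {ι κ R : Type*} [Fintype ι] [Fintype κ] [DecidableEq κ] [CommSemiring R]
    (A B : Matrix ι ι R) :
    tensorPower A κ * tensorPower B κ = tensorPower (A * B) κ := by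
  ext l m
  simp only [tensorPower, mul_apply, of_apply, ← prod_mul_distrib, Fintype.prod_sum]

theorem tensorPower_one {ι κ R : Type*} [DecidableEq ι] [Fintype κ] [CommSemiring R] :
    tensorPower (1 : Matrix ι ι R) κ = 1 := by
  ext l m
  simp [tensorPower, one_apply, prod_boole, funext_iff]

theorem tensF_eq_tensorPower (d n : ℕ) (q : ℂ) : tensF d n q = tensorPower (Fmat d q) (Fin n) :=
  rfl

theorem ofReal_sqrt_natCast_sq (d : ℕ) : (Real.sqrt d : ℂ) ^ 2 = d := by
  rw [← Complex.ofReal_pow, Real.sq_sqrt (Nat.cast_nonneg _), Complex.ofReal_natCast]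

section Fourier

variable {d : ℕ} [NeZero d] {q : ℂ}

theorem pow_val_mul_val_eq_zmodChar (hq : q ^ d = 1) (a b : ZMod d) :
    q ^ (a.val * b.val) = AddChar.zmodChar d hq (a * b) := by
  rw [← AddChar.zmodChar_apply' hq, Nat.cast_mul, ZMod.natCast_zmod_val, ZMod.natCast_zmod_val]

theorem zpow_neg_val_mul_val_eq_zmodChar (hq : q ^ d = 1) (a b : ZMod d) :
    q ^ (-((a.val * b.val : ℕ) : ℤ)) = AddChar.zmodChar d hq (-(a * b)) := by
  rw [_root_.zpow_neg, zpow_natCast, pow_val_mul_val_eq_zmodChar hq, AddChar.map_neg_eq_inv]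

theorem Fmat_inv_mul_Fmat (hq : IsPrimitiveRoot q d) : Fmat d q⁻¹ * Fmat d q = 1 := by
  set ψ := AddChar.zmodChar d hq.pow_eq_one
  have hterm : ∀ l l' s : ZMod d,
      Fmat d q⁻¹ l s * Fmat d q s l' = ((Real.sqrt d : ℂ) ^ 2)⁻¹ * ψ (s * (l' - l)) := by
    intro l l' s
    simp only [Fmat, of_apply, inv_pow, pow_val_mul_val_eq_zmodChar hq.pow_eq_one,
      ← AddChar.map_neg_eq_inv]
    rw [mul_sub, sub_eq_neg_add, ψ.map_add_eq_mul, mul_comm l' s]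
    ring
  ext l l'
  rw [mul_apply, sum_congr rfl fun s _ => hterm l l' s, ← mul_sum,
    AddChar.sum_mulShift _ (AddChar.zmodChar_primitive_of_primitive_root d hq), one_apply,
    ZMod.card, ofReal_sqrt_natCast_sq]
  by_cases h : l = l'
  · simp [h, NeZero.ne d]
  · simp [h, sub_eq_zero, Ne.symm h]

theorem tensF_inv_mul_tensF (hq : IsPrimitiveRoot q d) (n : ℕ) :
    tensF d n q⁻¹ * tensF d n q = 1 := by
  rw [tensF_eq_tensorPower, tensF_eq_tensorPower, tensorPower_mul, Fmat_inv_mul_Fmat hq,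
    tensorPower_one]

theorem tensF_apply (hq : q ^ d = 1) {n : ℕ} (l m : Fin n → ZMod d) :
    tensF d n q l m = (Real.sqrt d : ℂ)⁻¹ ^ n * AddChar.zmodChar d hq (∑ j, m j * l j) := by
  simp only [tensF, Fmat, of_apply, prod_mul_distrib, prod_const, card_univ, Fintype.card_fin,
    pow_val_mul_val_eq_zmodChar hq, AddChar.map_sum_eq_prod_s13]

end Fourier

noncomputable def ghz (d n : ℕ) [NeZero d] (q ζ : ℂ) (k : Fin n → ZMod d) :
    (Fin n → ZMod d) → ℂ :=
  ζ ^ (-(((∑ j, k j).val ^ 2 : ℕ) : ℤ)) •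
    (Real.sqrt d : ℂ)⁻¹ •
      ∑ s : ZMod d,
        q ^ (-((s.val * (∑ j, k j).val : ℕ) : ℤ)) • ket d n (fun j => (∑ i ∈ Iic j, k i) + s)

theorem ket_eq_single (d n : ℕ) (k : Fin n → ZMod d) : ket d n k = Pi.single k 1 := by
  funext m
  simp [ket, Pi.single_apply]

theorem sqrt_zpow_one_sub (d n : ℕ) [NeZero d] :
    (Real.sqrt d : ℂ) ^ (1 - (n : ℤ)) = (Real.sqrt d : ℂ)⁻¹ * (Real.sqrt d : ℂ)⁻¹ ^ n * d := by
  have hd : (Real.sqrt d : ℂ) ≠ 0 := by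
    simpa using NeZero.ne d
  rw [zpow_sub₀ hd, zpow_one, zpow_natCast, ← ofReal_sqrt_natCast_sq d, inv_pow]
  field_simp

section GHZ

variable {d n : ℕ} [NeZero d] {q ζ : ℂ}

theorem tensF_mulVec_ghz_apply (hq : IsPrimitiveRoot q d) (k l : Fin n → ZMod d) :
    (tensF d n q *ᵥ ghz d n q ζ k) l =
      if ∑ j, l j = ∑ j, k j then
        (Real.sqrt d : ℂ) ^ (1 - (n : ℤ)) * ζ ^ (-(((∑ j, k j).val ^ 2 : ℕ) : ℤ)) *
          AddChar.zmodChar d hq.pow_eq_one (∑ j, (∑ i ∈ Iic j, k i) * l j)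
      else 0 := by
  have hterm : ∀ s : ZMod d,
      q ^ (-((s.val * (∑ j, k j).val : ℕ) : ℤ)) * tensF d n q l (fun j => ∑ i ∈ Iic j, k i + s)
        = (Real.sqrt d : ℂ)⁻¹ ^ n *
            AddChar.zmodChar d hq.pow_eq_one (∑ j, (∑ i ∈ Iic j, k i) * l j) *
              AddChar.zmodChar d hq.pow_eq_one (s * (∑ j, l j - ∑ j, k j)) := by
    intro s
    rw [zpow_neg_val_mul_val_eq_zmodChar hq.pow_eq_one, tensF_apply hq.pow_eq_one]
    simp only [add_mul, sum_add_distrib, ← mul_sum, sub_eq_add_neg, mul_add, mul_neg,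
      AddChar.map_add_eq_mul]
    ring
  have hsum : (tensF d n q *ᵥ ghz d n q ζ k) l = ζ ^ (-(((∑ j, k j).val ^ 2 : ℕ) : ℤ)) *
      (Real.sqrt d : ℂ)⁻¹ * ∑ s : ZMod d, q ^ (-((s.val * (∑ j, k j).val : ℕ) : ℤ)) *
        tensF d n q l (fun j => ∑ i ∈ Iic j, k i + s) := by
    simp only [ghz, ket_eq_single, mulVec_smul, mulVec_sum, mulVec_single_one, Pi.smul_apply,
      Finset.sum_apply, col_apply, smul_eq_mul, mul_assoc]
  rw [hsum, sum_congr rfl fun s _ => hterm s, ← mul_sum,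
    AddChar.sum_mulShift _ (AddChar.zmodChar_primitive_of_primitive_root d hq), ZMod.card,
    sqrt_zpow_one_sub]
  by_cases h : ∑ j, l j = ∑ j, k j
  · rw [if_pos (sub_eq_zero.2 h), if_pos h]
    ring
  · rw [if_neg (sub_ne_zero.2 h), if_neg h, Nat.cast_zero, mul_zero, mul_zero]

theorem SFT_apply_of_sum_eq (hq : q ^ d = 1) (hζ : ζ ^ 2 = q) {k l : Fin n → ZMod d}
    (h : ∑ j, l j = ∑ j, k j) :
    SFT d n q ζ l k =
      (Real.sqrt d : ℂ) ^ (1 - (n : ℤ)) * ζ ^ (-(((∑ j, k j).val ^ 2 : ℕ) : ℤ)) *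
        AddChar.zmodChar d hq (∑ j, (∑ i ∈ Iic j, k i) * l j) := by
  set ψ := AddChar.zmodChar d hq
  set c₂ := ∑ p ∈ univ.filter (fun p : Fin n × Fin n => p.1 < p.2), l p.1 * k p.2
  have hζ0 : ζ ≠ 0 := by
    rintro rfl
    subst hζ
    simp [NeZero.ne d] at hq
  have hsq : ψ (∑ j, (∑ i ∈ Iic j, k i) * l j) * ψ c₂ =
      ζ ^ (∑ j, k j).val ^ 2 * ζ ^ (∑ j, k j).val ^ 2 := by
    rw [← ψ.map_add_eq_mul, sum_Iic_mul_add_sum_lt_mul, h, ← pow_val_mul_val_eq_zmodChar, ← hζ,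
      ← pow_mul, ← pow_add]
    ring_nf
  have hprod : ∏ p ∈ univ.filter (fun p : Fin n × Fin n => p.1 < p.2),
      q ^ (-(((l p.1).val * (k p.2).val : ℕ) : ℤ)) = (ψ c₂)⁻¹ := by
    rw [AddChar.map_sum_eq_prod_s13, ← prod_inv_distrib]
    simp only [zpow_neg_val_mul_val_eq_zmodChar hq, AddChar.map_neg_eq_inv, ψ]
  rw [SFT, of_apply, if_pos h, hprod, h, _root_.zpow_neg, zpow_natCast]
  have hc₂ : ψ c₂ ≠ 0 := (ψ.val_isUnit c₂).ne_zero
  field_simp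
  linear_combination (-(Real.sqrt d : ℂ) ^ (1 - (n : ℤ))) * hsq

theorem tensF_mulVec_ghz (hq : IsPrimitiveRoot q d) (hζ : ζ ^ 2 = q) (k : Fin n → ZMod d) :
    tensF d n q *ᵥ ghz d n q ζ k = SFT d n q ζ *ᵥ ket d n k := by
  funext l
  rw [tensF_mulVec_ghz_apply hq, ket_eq_single, mulVec_single_one, col_apply]
  split_ifs with h
  · exact (SFT_apply_of_sum_eq hq.pow_eq_one hζ h).symm
  · rw [SFT, of_apply, if_neg h]

end GHZ

theorem stmt_13_general (d n : ℕ) [NeZero d] (q ζ : ℂ)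
    (hq : q = Complex.exp (2 * Real.pi * Complex.I / d))
    (hζ2 : ζ ^ 2 = q) (k : Fin n → ZMod d) :
    ((tensF d n q)⁻¹ * SFT d n q ζ).mulVec (ket d n k)
      = ζ ^ (-(((∑ j, k j).val ^ 2 : ℕ) : ℤ)) •
          (Real.sqrt d : ℂ)⁻¹ •
            ∑ s : ZMod d,
              q ^ (-((s.val * (∑ j, k j).val : ℕ) : ℤ)) •
                ket d n (fun j => (∑ i ∈ Finset.Iic j, k i) + s) := by
  have hprim : IsPrimitiveRoot q d := hq ▸ Complex.isPrimitiveRoot_exp d (NeZero.ne d)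
  change _ = ghz d n q ζ k
  rw [inv_eq_left_inv (tensF_inv_mul_tensF hprim n), ← mulVec_mulVec, ← tensF_mulVec_ghz hprim hζ2,
    mulVec_mulVec, tensF_inv_mul_tensF hprim n, one_mulVec]

/-- for every `\vec k`, the GHZ-type resource state obtained by inverse
Fourier transforming `|Max_{\vec k}⟩ = F_s e_{\vec k}` is
`|GHZ_{\vec k}⟩ = (F ⊗ ⋯ ⊗ F)⁻¹ F_s e_{\vec k}
= ζ^{-|\vec k|²} d^{-1/2} ∑_{s} q^{-s|\vec k|} e_{(k₁+s, k₁+k₂+s, …, |\vec k|+s)}`. -/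
theorem stmt_13 (d n : ℕ) [NeZero d] (hn : 1 ≤ n) (q ζ : ℂ)
    (hq : q = Complex.exp (2 * Real.pi * Complex.I / d))
    (hζ2 : ζ ^ 2 = q) (hζd : ζ ^ d ^ 2 = 1) (k : Fin n → ZMod d) :
    ((tensF d n q)⁻¹ * SFT d n q ζ).mulVec (ket d n k)
      = ζ ^ (-(((∑ j, k j).val ^ 2 : ℕ) : ℤ)) •
          (Real.sqrt d : ℂ)⁻¹ •
            ∑ s : ZMod d,
              q ^ (-((s.val * (∑ j, k j).val : ℕ) : ℤ)) •
                ket d n (fun j => (∑ i ∈ Finset.Iic j, k i) + s) :=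
  stmt_13_general d n q ζ hq hζ2 k
end

section
/- The 2-qudit resource state |Max⟩₂ = F_s e_{(0,0)} is produced by the original Hadamard–CNOT style circuit: F_s e_{(0,0)} = C_{1,X}⁻¹ (F ⊗ 1) e_{(0,0)}. -/
open Kronecker

/-- The controlled-X gate with first qudit as control: `C_{1,X} e_{(k₁,k₂)} = e_{(k₁,k₂+k₁)}`. -/
noncomputable def C1X (d : ℕ) : Matrix (ZMod d × ZMod d) (ZMod d × ZMod d) ℂ :=
  Matrix.of fun j k => if j = (k.1, k.2 + k.1) then 1 else 0

/-- The string Fourier transform `F_s` on 2-qudits: its `((ℓ₁,ℓ₂),(k₁,k₂))` entry equals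
`d^{-1/2} · ζ^{(ℓ₁+ℓ₂)²} · q^{-ℓ₁ k₂}` if `ℓ₁+ℓ₂ = k₁+k₂`, and `0` otherwise. -/
noncomputable def SFT2 (d : ℕ) (q ζ : ℂ) :
    Matrix (ZMod d × ZMod d) (ZMod d × ZMod d) ℂ :=
  Matrix.of fun l k =>
    if l.1 + l.2 = k.1 + k.2 then
      (Real.sqrt d : ℂ)⁻¹ * ζ ^ (l.1 + l.2).val ^ 2 *
        q ^ (-((l.1.val * k.2.val : ℕ) : ℤ))
    else 0

/-- The product basis vector `e_{(k₁,k₂)}` of the 2-qudit space. -/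
noncomputable def ket2 (d : ℕ) (k : ZMod d × ZMod d) : ZMod d × ZMod d → ℂ :=
  fun m => if m = k then 1 else 0

/-- Explicit inverse of `C1X`. -/
noncomputable def C1Xinv (d : ℕ) : Matrix (ZMod d × ZMod d) (ZMod d × ZMod d) ℂ :=
  Matrix.of fun j k => if k = (j.1, j.2 + j.1) then 1 else 0

lemma C1X_mul_inv (d : ℕ) [NeZero d] : C1X d * C1Xinv d = 1 := by
  ext j k
  simp only [Matrix.mul_apply, C1X, C1Xinv, Matrix.of_apply, Matrix.one_apply]
  rw [Finset.sum_eq_single ((j.1, j.2 - j.1) : ZMod d × ZMod d)]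
  · simp [eq_comm]
  · intro x _ hx
    rw [if_neg, zero_mul]
    intro h
    subst h
    simp at hx
  · simp

/-- the 2-qudit resource state `|Max⟩₂ = F_s e_{(0,0)}` is produced by the
original Hadamard–CNOT style circuit: `F_s e_{(0,0)} = C_{1,X}⁻¹ (F ⊗ 1) e_{(0,0)}`. -/
theorem stmt_16 (d : ℕ) [NeZero d] (q ζ : ℂ)
    (hq : q = Complex.exp (2 * Real.pi * Complex.I / d))
    (hζ2 : ζ ^ 2 = q) (hζd : ζ ^ d ^ 2 = 1) :
    (SFT2 d q ζ).mulVec (ket2 d (0, 0))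
      = ((C1X d)⁻¹ * (Fmat d q ⊗ₖ (1 : Matrix (ZMod d) (ZMod d) ℂ))).mulVec
          (ket2 d (0, 0)) := by
  have hinv : (C1X d)⁻¹ = C1Xinv d := Matrix.inv_eq_right_inv (C1X_mul_inv d)
  rw [hinv]
  funext l
  simp only [Matrix.mulVec, dotProduct, ket2, mul_ite, mul_one, mul_zero,
    Finset.sum_ite_eq' Finset.univ ((0:ZMod d),(0:ZMod d)), Finset.mem_univ, if_true]
  rw [Matrix.mul_apply]
  simp only [C1Xinv, Matrix.of_apply, ite_mul, one_mul, zero_mul,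
    Finset.sum_ite_eq Finset.univ, Finset.mem_univ, if_true]
  rw [Finset.sum_ite_eq' Finset.univ (l.1, l.2 + l.1), if_pos (Finset.mem_univ _)]
  by_cases h : l.1 + l.2 = 0
  · simp [SFT2, Fmat, Matrix.one_apply, h, add_comm l.2 l.1, ZMod.val_zero]
  · simp [SFT2, Fmat, Matrix.one_apply, h, add_comm l.2 l.1]
end
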